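/- arXiv:1411.2923 — 3 statements merged into one kernel-verified Lean document; each statement's English description precedes it below -/
import Mathlib

section
/- Decomposition of directional derivatives under an orthogonal splitting: let F : ℝ^n → ℝ, write ℝ^n = V ⊕ V^⊥ for a coordinate subspace V, and suppose F(x + αp) = G(x_V + α p_V) + H(α p_⊥) + o(α) near a point x ∈ V, where G is differentiable at x_V and H is positively homogeneous of degree 1 with H(0)=0. Then F'(x; p) = F'(x; p_V) + F'(x; p_⊥), where p = p_V + p_⊥ is the orthogonal decomposition of p. -/
/-!
The expansion along `p` shares its `G`-term with the expansion along `projIn S p` and its `H`-term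
with the one along `projOut S p` (since `H 0 = 0`, and `F x = G (projIn S x)` by the expansion
along `0`). Hence the difference quotient along `p` is the sum of the other two up to remainders
`r α / α → 0`.
-/

open Filter Topology

/-- Projection onto the coordinate subspace indexed by `S`. -/
def projIn {n : ℕ} (S : Finset (Fin n)) (p : Fin n → ℝ) : Fin n → ℝ :=
  fun i => if i ∈ S then p i else 0

/-- Projection onto the orthogonal complement of the coordinate subspace `S`. -/
def projOut {n : ℕ} (S : Finset (Fin n)) (p : Fin n → ℝ) : Fin n → ℝ :=
  fun i => if i ∈ S then 0 else p i

section Projections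

variable {n : ℕ} (S : Finset (Fin n)) (p : Fin n → ℝ)

@[simp] lemma projIn_projIn : projIn S (projIn S p) = projIn S p := by
  funext i; by_cases hi : i ∈ S <;> simp [projIn, hi]

@[simp] lemma projOut_projIn : projOut S (projIn S p) = 0 := by
  funext i; by_cases hi : i ∈ S <;> simp [projIn, projOut, hi]

@[simp] lemma projIn_projOut : projIn S (projOut S p) = 0 := by
  funext i; by_cases hi : i ∈ S <;> simp [projIn, projOut, hi]

@[simp] lemma projOut_projOut : projOut S (projOut S p) = projOut S p := by
  funext i; by_cases hi : i ∈ S <;> simp [projOut, hi]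

@[simp] lemma projIn_zero : projIn S (0 : Fin n → ℝ) = 0 := by
  funext i; simp [projIn]

@[simp] lemma projOut_zero : projOut S (0 : Fin n → ℝ) = 0 := by
  funext i; simp [projOut]

end Projections

lemma tendsto_nhdsGT_zero_of_tendsto_div {f : ℝ → ℝ} {L : ℝ}
    (h : Tendsto (fun α => f α / α) (𝓝[>] 0) (𝓝 L)) : Tendsto f (𝓝[>] 0) (𝓝 0) := by
  have hα : Tendsto (fun α : ℝ => α) (𝓝[>] 0) (𝓝 0) := tendsto_nhdsWithin_of_tendsto_nhds tendsto_id
  have hmul : f =ᶠ[𝓝[>] 0] fun α => α * (f α / α) := by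
    filter_upwards [self_mem_nhdsWithin] with α (hα : 0 < α)
    rw [mul_div_cancel₀ _ hα.ne']
  simpa using (hα.mul h).congr' hmul.symm

section Expansion

variable {n : ℕ} {S : Finset (Fin n)} {F G H : (Fin n → ℝ) → ℝ} {x : Fin n → ℝ}

/-- In direction `0` the remainder is the constant `F x - G (projIn S x)`, and it is `o(α)`. -/
lemma apply_eq_apply_projIn_of_expansion_zero (hH0 : H 0 = 0) {r : ℝ → ℝ}
    (hr : Tendsto (fun α => r α / α) (𝓝[>] 0) (𝓝 0))
    (he : ∀ α ∈ Set.Ioc (0 : ℝ) 1,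
      F (x + α • 0) = G (projIn S x + α • projIn S 0) + H (α • projOut S 0) + r α) :
    F x = G (projIn S x) := by
  have hconst : r =ᶠ[𝓝[>] 0] fun _ => F x - G (projIn S x) := by
    filter_upwards [Ioc_mem_nhdsGT (zero_lt_one' ℝ)] with α hα
    have := he α hα
    simp only [smul_zero, add_zero, projIn_zero, projOut_zero, hH0] at this
    linarith
  have := tendsto_nhds_unique (tendsto_const_nhds.congr' hconst.symm)
    (tendsto_nhdsGT_zero_of_tendsto_div hr)
  linarith

lemma sub_eq_of_expansions (hH0 : H 0 = 0) (hFx : F x = G (projIn S x)) {p : Fin n → ℝ}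
    {α rp rIn rOut : ℝ}
    (ep : F (x + α • p) = G (projIn S x + α • projIn S p) + H (α • projOut S p) + rp)
    (eIn : F (x + α • projIn S p) =
      G (projIn S x + α • projIn S (projIn S p)) + H (α • projOut S (projIn S p)) + rIn)
    (eOut : F (x + α • projOut S p) =
      G (projIn S x + α • projIn S (projOut S p)) + H (α • projOut S (projOut S p)) + rOut) :
    F (x + α • p) - F x =
      (F (x + α • projIn S p) - F x) + (F (x + α • projOut S p) - F x) - rIn - rOut + rp := by
  simp only [projIn_projIn, projOut_projIn, projIn_projOut, projOut_projOut, smul_zero,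
    add_zero, hH0] at eIn eOut
  rw [ep, eIn, eOut, hFx]
  ring

end Expansion

theorem dirDeriv_decomposition_general (n : ℕ) (S : Finset (Fin n))
    (F G H : (Fin n → ℝ) → ℝ) (x p : Fin n → ℝ)
    (hH0 : H 0 = 0)
    (hexp : ∀ q : Fin n → ℝ, ∃ r : ℝ → ℝ,
      Tendsto (fun α : ℝ => r α / α) (𝓝[>] 0) (𝓝 0) ∧
      ∀ α ∈ Set.Ioc (0:ℝ) 1,
        F (x + α • q) = G (projIn S x + α • projIn S q) + H (α • projOut S q) + r α)
    (LV Lperp : ℝ)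
    (hLV : Tendsto (fun α : ℝ => (F (x + α • projIn S p) - F x) / α)
      (𝓝[>] 0) (𝓝 LV))
    (hLperp : Tendsto (fun α : ℝ => (F (x + α • projOut S p) - F x) / α)
      (𝓝[>] 0) (𝓝 Lperp)) :
    Tendsto (fun α : ℝ => (F (x + α • p) - F x) / α) (𝓝[>] 0) (𝓝 (LV + Lperp)) := by
  obtain ⟨rp, hrp, ep⟩ := hexp p
  obtain ⟨rIn, hrIn, eIn⟩ := hexp (projIn S p)
  obtain ⟨rOut, hrOut, eOut⟩ := hexp (projOut S p)
  obtain ⟨r0, hr0, e0⟩ := hexp 0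
  have hFx := apply_eq_apply_projIn_of_expansion_zero hH0 hr0 e0
  have hquot : (fun α : ℝ => (F (x + α • p) - F x) / α) =ᶠ[𝓝[>] 0]
      fun α => (F (x + α • projIn S p) - F x) / α + (F (x + α • projOut S p) - F x) / α
        - rIn α / α - rOut α / α + rp α / α := by
    filter_upwards [Ioc_mem_nhdsGT (zero_lt_one' ℝ)] with α hα
    rw [sub_eq_of_expansions hH0 hFx (ep α hα) (eIn α hα) (eOut α hα)]
    ring
  simpa using ((((hLV.add hLperp).sub hrIn).sub hrOut).add hrp).congr' hquot.symm

/-- Decomposition of one-sided directional derivatives under an orthogonal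
coordinate splitting: if near `x ∈ V`,
`F(x+αq) = G(x_V + αq_V) + H(αq_⊥) + o(α)` with `G` differentiable and `H`
positively homogeneous with `H(0)=0`, then `F'(x;p) = F'(x;p_V) + F'(x;p_⊥)`. -/
theorem dirDeriv_decomposition (n : ℕ) (S : Finset (Fin n))
    (F G H : (Fin n → ℝ) → ℝ) (x p : Fin n → ℝ)
    (hxS : ∀ i ∉ S, x i = 0)
    (hG : DifferentiableAt ℝ G (projIn S x))
    (hH0 : H 0 = 0)
    (hHhom : ∀ c : ℝ, 0 < c → ∀ q : Fin n → ℝ, H (c • q) = c * H q)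
    (hexp : ∀ q : Fin n → ℝ, ∃ r : ℝ → ℝ,
      Tendsto (fun α : ℝ => r α / α) (𝓝[>] 0) (𝓝 0) ∧
      ∀ α ∈ Set.Ioc (0:ℝ) 1,
        F (x + α • q) = G (projIn S x + α • projIn S q) + H (α • projOut S q) + r α)
    (LV Lperp : ℝ)
    (hLV : Tendsto (fun α : ℝ => (F (x + α • projIn S p) - F x) / α)
      (𝓝[>] 0) (𝓝 LV))
    (hLperp : Tendsto (fun α : ℝ => (F (x + α • projOut S p) - F x) / α)
      (𝓝[>] 0) (𝓝 Lperp)) :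
    Tendsto (fun α : ℝ => (F (x + α • p) - F x) / α) (𝓝[>] 0) (𝓝 (LV + Lperp)) :=
  dirDeriv_decomposition_general n S F G H x p hH0 hexp LV Lperp hLV hLperp
end

section
/- The one-sided directional derivative of the Fréchet-type function F(x) = Σ_{i=1}^n Σ_{l=1}^{k_i} (‖x|_{A^i_l}‖ + b^i_l)² + Σ_{i=1}^n Σ_{e∈C^i} (x_e − c^i_e)², at a point x in the nonnegative orthant, in direction p, equals Σ_{e : x_e > 0} p_e·[∇F(x)]_e + 2·Σ_i ( Σ_{l : ‖x|_{A^i_l}‖ = 0} b^i_l·‖p|_{A^i_l}‖ − Σ_{e ∈ C^i, x_e = 0} p_e·c^i_e ), where [∇F(x)]_e = 2Σ_i ( x_e(1 + b^i_l/‖x|_{A^i_l}‖) if e ∈ A^i_l, (x_e − c^i_e) if e ∈ C^i ). -/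
/-!
Restrict `F` to the ray `α ↦ x + α • p`, `α ≥ 0`. Every term is differentiable at `α = 0` except
a norm `‖x|_A‖` that vanishes; then `x|_A = 0`, so `‖(x + α • p)|_A‖ = α ‖p|_A‖` on the ray and the
term `(‖·|_A‖ + b)²` has right derivative `2 b ‖p|_A‖`. Summing the right derivatives and regrouping
them by coordinates gives the formula: coordinates with `x_e = 0` contribute nothing to the norm
terms, and `-p_e c_e` to the terms `(x_e - c_e)²`.
-/

open Filter Topology
open scoped Classical

/-- Euclidean norm of the restriction of `x` to the coordinate set `A`. -/
noncomputable def rnorm {m : ℕ} (x : Fin m → ℝ) (A : Finset (Fin m)) : ℝ :=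
  Real.sqrt (∑ e ∈ A, (x e)^2)

open Finset

theorem tendsto_slope_right_of_hasDerivWithinAt_Ici {E : Type*} [AddCommGroup E] [Module ℝ E]
    {f : E → ℝ} {x p : E} {d : ℝ}
    (h : HasDerivWithinAt (fun α : ℝ => f (x + α • p)) d (Set.Ici 0) 0) :
    Tendsto (fun α : ℝ => (f (x + α • p) - f x) / α) (𝓝[>] 0) (𝓝 d) := by
  refine ((hasDerivWithinAt_iff_tendsto_slope' (lt_irrefl 0)).mp
    (h.mono Set.Ioi_subset_Ici_self)).congr fun α => ?_
  simp [slope_def_field]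

section rnorm

variable {m : ℕ} {x : Fin m → ℝ} {A : Finset (Fin m)}

theorem eq_zero_of_rnorm_eq_zero (h : rnorm x A = 0) {e : Fin m} (he : e ∈ A) : x e = 0 := by
  have hsum : ∑ e ∈ A, x e ^ 2 = 0 :=
    (Real.sqrt_eq_zero (sum_nonneg fun e _ => sq_nonneg (x e))).mp h
  exact pow_eq_zero_iff two_ne_zero |>.mp
    ((sum_eq_zero_iff_of_nonneg fun e _ => sq_nonneg (x e)).mp hsum e he)

theorem rnorm_smul (α : ℝ) (p : Fin m → ℝ) (A : Finset (Fin m)) :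
    rnorm (α • p) A = |α| * rnorm p A := by
  simp [rnorm, mul_pow, ← mul_sum, Real.sqrt_mul (sq_nonneg _), Real.sqrt_sq_eq_abs]

theorem rnorm_add_of_rnorm_eq_zero (h : rnorm x A = 0) (y : Fin m → ℝ) :
    rnorm (x + y) A = rnorm y A := by
  unfold rnorm
  congr 1
  exact sum_congr rfl fun e he => by simp [eq_zero_of_rnorm_eq_zero h he]

theorem hasDerivAt_sum_sq_add_smul_sub (x p c : Fin m → ℝ) (A : Finset (Fin m)) :
    HasDerivAt (fun α : ℝ => ∑ e ∈ A, ((x + α • p) e - c e) ^ 2)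
      (2 * ∑ e ∈ A, (x e - c e) * p e) 0 := by
  rw [mul_sum]
  refine HasDerivAt.fun_sum fun e _ => ?_
  have h := (((hasDerivAt_id (0 : ℝ)).mul_const (p e)).const_add (x e - c e)).fun_pow 2
  refine (h.congr_deriv ?_).congr_of_eventuallyEq (.of_forall fun α => ?_)
  · simp only [id, zero_mul, add_zero, Nat.cast_ofNat, Nat.add_one_sub_one, pow_one, one_mul]
    ring
  · simp only [Pi.add_apply, Pi.smul_apply, smul_eq_mul, id]
    ring

theorem hasDerivWithinAt_rnorm_add_smul (x p : Fin m → ℝ) (A : Finset (Fin m)) :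
    HasDerivWithinAt (fun α : ℝ => rnorm (x + α • p) A)
      (if rnorm x A = 0 then rnorm p A else (∑ e ∈ A, x e * p e) / rnorm x A) (Set.Ici 0) 0 := by
  split_ifs with h
  · refine (((hasDerivAt_id (0 : ℝ)).mul_const (rnorm p A)).hasDerivWithinAt.congr_of_mem
      (fun α (hα : α ∈ Set.Ici 0) => ?_) Set.self_mem_Ici).congr_deriv (one_mul _)
    rw [rnorm_add_of_rnorm_eq_zero h, rnorm_smul, abs_of_nonneg hα, id]
  · have hsq : HasDerivAt (fun α : ℝ => ∑ e ∈ A, (x + α • p) e ^ 2)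
        (2 * ∑ e ∈ A, x e * p e) 0 := by
      simpa using hasDerivAt_sum_sq_add_smul_sub x p 0 A
    have hpos : ∑ e ∈ A, (x + (0 : ℝ) • p) e ^ 2 ≠ 0 := fun h0 => h (by simp_all [rnorm])
    refine (hsq.sqrt hpos).hasDerivWithinAt.congr_deriv ?_
    simp only [zero_smul, add_zero]
    rw [mul_div_mul_left _ _ two_ne_zero]
    rfl

theorem hasDerivWithinAt_sq_rnorm_add_smul_add (x p : Fin m → ℝ) (A : Finset (Fin m)) (b : ℝ) :
    HasDerivWithinAt (fun α : ℝ => (rnorm (x + α • p) A + b) ^ 2)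
      (2 * ∑ e ∈ A, x e * p e * (1 + b / rnorm x A)
        + 2 * if rnorm x A = 0 then b * rnorm p A else 0) (Set.Ici 0) 0 := by
  refine (((hasDerivWithinAt_rnorm_add_smul x p A).add_const b).fun_pow 2).congr_deriv ?_
  simp only [zero_smul, add_zero, Nat.cast_ofNat, Nat.add_one_sub_one, pow_one]
  split_ifs with h
  · rw [sum_eq_zero fun e he => by simp [eq_zero_of_rnorm_eq_zero h he], h]
    ring
  · rw [← sum_mul]
    field_simp
    ring

end rnorm

theorem sum_filter_pos_ite_mem {ι : Type*} [Fintype ι] [DecidableEq ι] {x : ι → ℝ}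
    (hx : ∀ e, 0 ≤ x e) (s : Finset ι) (f : ι → ℝ) :
    ∑ e with 0 < x e, (if e ∈ s then f e else 0) = ∑ e ∈ s, f e - ∑ e ∈ s with x e = 0, f e := by
  have hzero : s.filter (fun e => ¬ 0 < x e) = s.filter (fun e => x e = 0) :=
    filter_congr fun e _ => by rw [not_lt, (hx e).ge_iff_eq']
  rw [← sum_filter_add_sum_filter_not s (fun e => 0 < x e), hzero, add_sub_cancel_right,
    sum_ite_mem]
  congr 1
  ext e
  simp [and_comm]

theorem frechet_dirDeriv_value_eq_sum {m n : ℕ} {k : Fin n → ℕ}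
    (A : (i : Fin n) → Fin (k i) → Finset (Fin m)) (C : Fin n → Finset (Fin m))
    (b : (i : Fin n) → Fin (k i) → ℝ) (c : Fin n → Fin m → ℝ)
    {x : Fin m → ℝ} (hx : ∀ e, 0 ≤ x e) (p : Fin m → ℝ) :
    (∑ e with 0 < x e, p e * (2 * ∑ i,
        ((∑ l, if e ∈ A i l then x e * (1 + b i l / rnorm x (A i l)) else 0)
          + if e ∈ C i then x e - c i e else 0)))
      + 2 * ∑ i, ((∑ l with rnorm x (A i l) = 0, b i l * rnorm p (A i l))
          - ∑ e ∈ C i with x e = 0, p e * c i e)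
    = ∑ i, ((∑ l, (2 * ∑ e ∈ A i l, x e * p e * (1 + b i l / rnorm x (A i l))
          + 2 * if rnorm x (A i l) = 0 then b i l * rnorm p (A i l) else 0))
        + 2 * ∑ e ∈ C i, (x e - c i e) * p e) := by
  have hpt : ∀ e, p e * (2 * ∑ i,
        ((∑ l, if e ∈ A i l then x e * (1 + b i l / rnorm x (A i l)) else 0)
          + if e ∈ C i then x e - c i e else 0))
      = 2 * ∑ i, ((∑ l, if e ∈ A i l then x e * p e * (1 + b i l / rnorm x (A i l)) else 0)
        + if e ∈ C i then (x e - c i e) * p e else 0) := fun e => by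
    simp only [mul_left_comm (p e), mul_sum, mul_add, mul_ite, mul_zero]
    congr! 4 <;> ring
  rw [sum_congr rfl fun e _ => hpt e, ← mul_sum, sum_comm, ← mul_add, ← sum_add_distrib,
    mul_sum]
  refine sum_congr rfl fun i _ => ?_
  have hA : ∀ l, ∑ e ∈ A i l with x e = 0, x e * p e * (1 + b i l / rnorm x (A i l)) = 0 :=
    fun l => sum_eq_zero fun e he => by simp [(mem_filter.1 he).2]
  have hC : ∑ e ∈ C i with x e = 0, (x e - c i e) * p e
      = -∑ e ∈ C i with x e = 0, p e * c i e := by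
    rw [← sum_neg_distrib]
    exact sum_congr rfl fun e he => by rw [(mem_filter.1 he).2]; ring
  rw [sum_add_distrib, sum_comm]
  simp only [sum_filter_pos_ite_mem hx, hA, hC, sub_zero]
  rw [sum_filter (fun l => rnorm x (A i l) = 0), sum_add_distrib, ← mul_sum, ← mul_sum]
  ring

theorem frechet_dirDeriv_value_general (m n : ℕ) (k : Fin n → ℕ)
    (A : (i : Fin n) → Fin (k i) → Finset (Fin m))
    (C : Fin n → Finset (Fin m))
    (b : (i : Fin n) → Fin (k i) → ℝ) (c : Fin n → Fin m → ℝ)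
    (x p : Fin m → ℝ) (hx : ∀ e, 0 ≤ x e)
    (F : (Fin m → ℝ) → ℝ)
    (hF : F = fun y => ∑ i, ((∑ l, (rnorm y (A i l) + b i l)^2)
        + ∑ e ∈ C i, (y e - c i e)^2))
    (grad : Fin m → ℝ)
    (hgrad : grad = fun e => 2 * ∑ i,
        ((∑ l, if e ∈ A i l then x e * (1 + b i l / rnorm x (A i l)) else 0)
          + (if e ∈ C i then x e - c i e else 0))) :
    Tendsto (fun α : ℝ => (F (x + α • p) - F x) / α) (𝓝[>] 0)
      (𝓝 ((∑ e ∈ Finset.univ.filter (fun e => 0 < x e), p e * grad e)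
        + 2 * ∑ i,
          ((∑ l ∈ Finset.univ.filter (fun l => rnorm x (A i l) = 0),
              b i l * rnorm p (A i l))
            - ∑ e ∈ (C i).filter (fun e => x e = 0), p e * c i e))) := by
  subst hgrad
  rw [frechet_dirDeriv_value_eq_sum A C b c hx p]
  apply tendsto_slope_right_of_hasDerivWithinAt_Ici
  subst hF
  exact HasDerivWithinAt.fun_sum fun i _ =>
    (HasDerivWithinAt.fun_sum fun l _ => hasDerivWithinAt_sq_rnorm_add_smul_add x p _ _).add
      (hasDerivAt_sum_sq_add_smul_sub x p (c i) (C i)).hasDerivWithinAt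

/-- Value of the one-sided directional derivative of the Fréchet-type function
`F(x) = Σᵢ Σₗ (‖x|_{Aᵢₗ}‖ + bᵢₗ)² + Σᵢ Σ_{e∈Cᵢ} (xₑ - cᵢₑ)²` at a point `x` of the
nonnegative orthant in a feasible direction `p`: it decomposes into the restricted
gradient part over positive coordinates, the local support-pair norm terms, and the
common-edge terms on zero coordinates. -/
theorem frechet_dirDeriv_value (m n : ℕ) (k : Fin n → ℕ)
    (A : (i : Fin n) → Fin (k i) → Finset (Fin m))
    (C : Fin n → Finset (Fin m))
    (b : (i : Fin n) → Fin (k i) → ℝ) (c : Fin n → Fin m → ℝ)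
    (hAdisj : ∀ i, ∀ l l' : Fin (k i), l ≠ l' → Disjoint (A i l) (A i l'))
    (hAC : ∀ i l, Disjoint (A i l) (C i))
    (hb : ∀ i l, 0 ≤ b i l) (hc : ∀ i e, 0 ≤ c i e)
    (x p : Fin m → ℝ) (hx : ∀ e, 0 ≤ x e) (hp : ∀ e, x e = 0 → 0 ≤ p e)
    (F : (Fin m → ℝ) → ℝ)
    (hF : F = fun y => ∑ i, ((∑ l, (rnorm y (A i l) + b i l)^2)
        + ∑ e ∈ C i, (y e - c i e)^2))
    (grad : Fin m → ℝ)
    (hgrad : grad = fun e => 2 * ∑ i,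
        ((∑ l, if e ∈ A i l then x e * (1 + b i l / rnorm x (A i l)) else 0)
          + (if e ∈ C i then x e - c i e else 0))) :
    Tendsto (fun α : ℝ => (F (x + α • p) - F x) / α) (𝓝[>] 0)
      (𝓝 ((∑ e ∈ Finset.univ.filter (fun e => 0 < x e), p e * grad e)
        + 2 * ∑ i,
          ((∑ l ∈ Finset.univ.filter (fun l => rnorm x (A i l) = 0),
              b i l * rnorm p (A i l))
            - ∑ e ∈ (C i).filter (fun e => x e = 0), p e * c i e))) :=
  frechet_dirDeriv_value_general m n k A C b c x p hx F hF grad hgrad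
end

section
/- Compatibility of splits is symmetric and each maximal pairwise-compatible collection of splits of {0,…,r} contains at most r−2 splits. In particular, any tree in T_r has at most r−2 interior edges. -/
/-!
Complements of the blocks containing `0` turn a pairwise-compatible collection of splits of
`{0,…,r}` into a laminar family of proper subsets of `{1,…,r}` with at least two elements each.
A laminar family of sets of size at least two inside an `n`-set has at most `n - 1` members, by
induction on `n`: erasing one point `x` of a member `B` of minimal size sends the other members
injectively to such a family inside an `(n-1)`-set. Adding the whole set `{1,…,r}` to the family
of complements then leaves room for at most `r - 2` of them.
-/

/-- A split of `{0,…,n-1}`: a bipartition with both blocks of size at least 2,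
represented by the block containing the label 0. -/
def Split (n : ℕ) [NeZero n] : Type :=
  {A : Finset (Fin n) // (0 : Fin n) ∈ A ∧ 2 ≤ A.card ∧ 2 ≤ Aᶜ.card}

/-- Two splits are compatible if one of the four pairwise intersections of their
blocks is empty. -/
def Split.Compat {n : ℕ} [NeZero n] (s t : Split n) : Prop :=
  s.1 ∩ t.1 = ∅ ∨ s.1 ∩ t.1ᶜ = ∅ ∨ s.1ᶜ ∩ t.1 = ∅ ∨ s.1ᶜ ∩ t.1ᶜ = ∅

open Finset

/-- Erasing `x ∈ B` cannot identify a superset of `B` with a set disjoint from `B`, because the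
former keeps the nonempty set `B.erase x`. -/
theorem injOn_erase_of_forall_subset_or_disjoint {α : Type*} [DecidableEq α]
    {L : Finset (Finset α)} {B : Finset α} {x : α} (hx : x ∈ B) (hB : 2 ≤ #B) (hL : ∀ C ∈ L, B ⊆ C ∨ Disjoint B C) :
    Set.InjOn (·.erase x) (L : Set (Finset α)) := by
  have hBx : (B.erase x).Nonempty := card_pos.mp (by rw [card_erase_of_mem hx]; omega)
  have key : ∀ C ∈ L, ∀ D ∈ L, B ⊆ C → Disjoint B D → C.erase x ≠ D.erase x := by
    intro C _ D _ hBC hBD hCD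
    obtain ⟨y, hy⟩ := hBx
    have hyD : y ∈ D.erase x := hCD ▸ erase_subset_erase x hBC hy
    exact disjoint_left.mp hBD (mem_of_mem_erase hy) (mem_of_mem_erase hyD)
  intro C hC D hD (hCD : C.erase x = D.erase x)
  have herase : ∀ {E}, Disjoint B E → E.erase x = E := fun h =>
    erase_eq_of_notMem (disjoint_left.mp h hx)
  rcases hL C hC with hBC | hBC <;> rcases hL D hD with hBD | hBD
  · exact erase_injOn' x (hBC hx) (hBD hx) hCD
  · exact absurd hCD (key C hC D hD hBC hBD)
  · exact absurd hCD.symm (key D hD C hC hBD hBC)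
  · rwa [herase hBC, herase hBD] at hCD

def IsLaminar {α : Type*} (L : Finset (Finset α)) : Prop :=
  ∀ B ∈ L, ∀ C ∈ L, B ⊆ C ∨ C ⊆ B ∨ Disjoint B C

namespace IsLaminar

variable {α : Type*} {L L' : Finset (Finset α)}

theorem mono (hL : IsLaminar L) (h : L' ⊆ L) : IsLaminar L' :=
  fun B hB C hC => hL B (h hB) C (h hC)

theorem ssubset_or_disjoint_of_card_le (hL : IsLaminar L) {B C : Finset α} (hB : B ∈ L)
    (hmin : ∀ D ∈ L, #B ≤ #D) (hC : C ∈ L) (hCB : C ≠ B) : B ⊂ C ∨ Disjoint B C := by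
  rcases hL B hB C hC with h | h | h
  · exact Or.inl (Finset.ssubset_iff_subset_ne.mpr ⟨h, hCB.symm⟩)
  · exact absurd (eq_of_subset_of_card_le h (hmin C hC)) hCB
  · exact Or.inr h

variable [DecidableEq α]

theorem insert_of_forall_subset (hL : IsLaminar L) {M : Finset α} (hM : ∀ C ∈ L, C ⊆ M) :
    IsLaminar (insert M L) := by
  intro B hB C hC
  rcases mem_insert.mp hB with rfl | hBL
  · rcases mem_insert.mp hC with rfl | hCL
    · exact Or.inl subset_rfl
    · exact Or.inr (Or.inl (hM C hCL))
  · rcases mem_insert.mp hC with rfl | hCL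
    · exact Or.inl (hM B hBL)
    · exact hL B hBL C hCL

theorem image_erase (hL : IsLaminar L) (x : α) : IsLaminar (L.image (·.erase x)) := by
  simp only [IsLaminar, forall_mem_image]
  intro B hB C hC
  rcases hL B hB C hC with h | h | h
  · exact Or.inl (erase_subset_erase x h)
  · exact Or.inr (Or.inl (erase_subset_erase x h))
  · exact Or.inr (Or.inr (h.mono (erase_subset x B) (erase_subset x C)))

end IsLaminar


namespace IsLaminar

variable {α : Type*} [DecidableEq α]

theorem card_le_card_sub_one {M : Finset α} {L : Finset (Finset α)} (hL : IsLaminar L)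
    (hsub : ∀ C ∈ L, C ⊆ M) (hcard : ∀ C ∈ L, 2 ≤ #C) : #L ≤ #M - 1 := by
  induction M using Finset.strongInduction generalizing L with
  | H M ih =>
  obtain rfl | hne := L.eq_empty_or_nonempty
  · simp
  obtain ⟨B, hB, hmin⟩ := L.exists_min_image card hne
  obtain ⟨x, hx⟩ : B.Nonempty := card_pos.mp (by linarith [hcard B hB])
  have hdich : ∀ C ∈ L.erase B, B ⊂ C ∨ Disjoint B C := fun C hC =>
    hL.ssubset_or_disjoint_of_card_le hB hmin (mem_of_mem_erase hC) (ne_of_mem_erase hC)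
  have hinj := injOn_erase_of_forall_subset_or_disjoint hx (hcard B hB)
    fun C hC => (hdich C hC).imp_left subset_of_ssubset
  have hIH : #((L.erase B).image (·.erase x)) ≤ #(M.erase x) - 1 := by
    refine ih _ (erase_ssubset (hsub B hB hx)) ((hL.mono (erase_subset B L)).image_erase x)
      ?_ ?_ <;> simp only [forall_mem_image]
    · exact fun C hC => erase_subset_erase x (hsub C (mem_of_mem_erase hC))
    · intro C hC
      rcases hdich C hC with hBC | hBC
      · have hBC_lt := card_lt_card hBC
        have hB2 := hcard B hB
        rw [card_erase_of_mem (hBC.subset hx)]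
        omega
      · rw [erase_eq_of_notMem (disjoint_left.mp hBC hx)]
        exact hcard C (mem_of_mem_erase hC)
  rw [card_image_of_injOn hinj, card_erase_of_mem hB, card_erase_of_mem (hsub B hB hx)] at hIH
  have hM2 : 2 ≤ #M := (hcard B hB).trans (card_le_card (hsub B hB))
  have hL1 : 1 ≤ #L := card_pos.mpr hne
  omega

theorem card_le_card_sub_two {M : Finset α} {L : Finset (Finset α)} (hL : IsLaminar L)
    (hsub : ∀ C ∈ L, C ⊂ M) (hcard : ∀ C ∈ L, 2 ≤ #C) : #L ≤ #M - 2 := by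
  obtain rfl | ⟨B, hB⟩ := L.eq_empty_or_nonempty
  · simp
  have hM : M ∉ L := fun h => (hsub M h).ne rfl
  have hsub' : ∀ C ∈ L, C ⊆ M := fun C hC => (hsub C hC).subset
  have := (hL.insert_of_forall_subset hsub').card_le_card_sub_one (M := M)
    (forall_mem_insert _ _ _ |>.mpr ⟨subset_rfl, hsub'⟩)
    (forall_mem_insert _ _ _ |>.mpr ⟨(hcard B hB).trans (card_le_card (hsub' B hB)), hcard⟩)
  rw [card_insert_of_notMem hM] at this
  omega

end IsLaminar

namespace Split

variable {n : ℕ} [NeZero n]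

theorem Compat.symm {s t : Split n} (h : s.Compat t) : t.Compat s := by
  unfold Compat at *
  rw [inter_comm t.1, inter_comm t.1, inter_comm t.1ᶜ, inter_comm t.1ᶜ]
  tauto

theorem compl_ssubset_erase_zero (s : Split n) : s.1ᶜ ⊂ univ.erase 0 := by
  refine Finset.ssubset_iff_subset_ne.mpr ⟨fun x hx => mem_erase.mpr ⟨?_, mem_univ x⟩, fun h => ?_⟩
  · rintro rfl
    exact mem_compl.mp hx s.2.1
  · have := congrArg card h
    rw [card_compl, card_erase_of_mem (mem_univ 0), card_univ] at this
    have := s.2.2.1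
    have := card_le_univ s.1
    omega

theorem Compat.compl_subset_or_subset_or_disjoint {s t : Split n} (h : s.Compat t) :
    s.1ᶜ ⊆ t.1ᶜ ∨ t.1ᶜ ⊆ s.1ᶜ ∨ Disjoint s.1ᶜ t.1ᶜ := by
  simp only [Compat, ← disjoint_iff_inter_eq_empty, disjoint_compl_right_iff,
    disjoint_compl_left_iff, compl_subset_compl] at h ⊢
  rcases h with h | h | h | h
  · exact absurd (disjoint_left.mp h s.2.1) (not_not.mpr t.2.1)
  · exact Or.inr (Or.inl h)
  · exact Or.inl h
  · exact Or.inr (Or.inr h)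

end Split

/-- Compatibility of splits is symmetric, and any pairwise-compatible collection of
splits of `{0,…,r}` has at most `r-2` elements: a tree in `T_r` has at most `r-2`
interior edges. -/
theorem compat_symm_and_max_interior_edges (r : ℕ) :
    (∀ s t : Split (r+1), Split.Compat s t → Split.Compat t s) ∧
    (∀ S : Finset (Split (r+1)), (∀ a ∈ S, ∀ b ∈ S, Split.Compat a b) →
      S.card ≤ r - 2) := by
  refine ⟨fun s t => Split.Compat.symm, fun S hS => ?_⟩
  have hinj : Set.InjOn (fun s : Split (r+1) => s.1ᶜ) S :=
    fun a _ b _ hab => Subtype.ext (compl_inj_iff.mp hab)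
  have hlam : IsLaminar (S.image fun s => s.1ᶜ) := by
    simp only [IsLaminar, forall_mem_image]
    exact fun a ha b hb => (hS a ha b hb).compl_subset_or_subset_or_disjoint
  have := hlam.card_le_card_sub_two (M := univ.erase 0)
    (by simpa using fun s _ => s.compl_ssubset_erase_zero) (by simpa using fun s _ => s.2.2.2)
  rwa [card_image_of_injOn hinj, card_erase_of_mem (mem_univ 0), card_univ,
    Fintype.card_fin, Nat.add_sub_cancel] at this
end
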